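/- arXiv:2210.07389 — 2 statements merged into one kernel-verified Lean document; each statement's English description precedes it below -/
import Mathlib

section
/- The Artin map f̃_A is injective on each of the intervals J₁,…,J₈ and is Markov with respect to this partition, with image equalities: f̃_A(J₁) = J₁ ∪ J₂, f̃_A(J₂) = J₃ ∪ J₄, f̃_A(J₃) = J₇, f̃_A(J₄) = J₈, f̃_A(J₅) = J₁, f̃_A(J₆) = J₂, f̃_A(J₇) = J₅ ∪ J₆, f̃_A(J₈) = J₇ ∪ J₈. -/
/-- The compactified translation `T̃ = k ∘ T ∘ k⁻¹`, `T(x) = x + 1`, on `[-1,1)`. -/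
noncomputable def Ttilde (x : ℝ) : ℝ :=
  if x ≤ -1/2 then -2 - 1/x
  else if x ≤ 0 then (1 + 2*x) / (2 + 3*x)
  else 1 / (2 - x)

/-- The compactified inversion `S̃ = k ∘ S ∘ k⁻¹`, `S(x) = -1/x`, on `[-1,1)`. -/
noncomputable def Stilde (x : ℝ) : ℝ :=
  if x < 0 then x + 1 else if x = 0 then -1 else x - 1

/-- The compactified inverse translation `T̃⁻¹ = k ∘ T⁻¹ ∘ k⁻¹` on `[-1,1)`. -/
noncomputable def Tinvtilde (x : ℝ) : ℝ :=
  if x ≤ 0 then -1 / (2 + x)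
  else if x ≤ 1/2 then (1 - 2*x) / (3*x - 2)
  else 2 - 1/x

/-- The Artin map `f̃_A : [-1,1) → [-1,1)`. -/
noncomputable def fA (x : ℝ) : ℝ :=
  if x < -1/2 then Ttilde x
  else if x < 1/2 then Stilde x
  else Tinvtilde x

def J1 : Set ℝ := Set.Ico (-1) (-2/3)
def J2 : Set ℝ := Set.Ico (-2/3) (-1/2)
def J3 : Set ℝ := Set.Ico (-1/2) (-1/3)
def J4 : Set ℝ := Set.Ico (-1/3) 0
def J5 : Set ℝ := Set.Ico 0 (1/3)
def J6 : Set ℝ := Set.Ico (1/3) (1/2)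
def J7 : Set ℝ := Set.Ico (1/2) (2/3)
def J8 : Set ℝ := Set.Ico (2/3) 1

/-! On each of `[-1,-1/2)`, `[-1/2,0)`, `[0,1/2)` and `[1/2,1)` the Artin map agrees with a
continuous strictly increasing function, namely `x ↦ -2 - 1/x`, `x + 1`, `x - 1` and `2 - 1/x`
(the special values `f̃_A 0 = -1` and `f̃_A (1/2) = 0` fit these formulas). Hence it is injective
on every `Jᵢ = [a,b)`, and by the intermediate value theorem maps it onto `[g a, g b)` for the
corresponding `g`; the Markov image equalities are read off from the values at the endpoints. -/

open Set

theorem Set.EqOn.injOn_and_image_Ico {α δ : Type*} [ConditionallyCompleteLinearOrder α]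
    [TopologicalSpace α] [OrderTopology α] [DenselyOrdered α]
    [LinearOrder δ] [TopologicalSpace δ] [OrderClosedTopology δ]
    {f g : α → δ} {a b : α} (hab : a ≤ b) (hfg : EqOn f g (Ico a b))
    (hcont : ContinuousOn g (Icc a b)) (hmono : StrictMonoOn g (Icc a b)) :
    InjOn f (Ico a b) ∧ f '' Ico a b = Ico (g a) (g b) :=
  ⟨(hmono.injOn.mono Ico_subset_Icc_self).congr hfg.symm,
    hfg.image_eq.trans (hcont.image_Ico_of_strictMonoOn hab hmono)⟩

section ArtinMap

variable {x a b : ℝ}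

lemma fA_of_lt_neg_half (hx : x < -1/2) : fA x = -2 - 1/x := by
  rw [fA, if_pos hx, Ttilde, if_pos hx.le]

lemma fA_of_mem_Ico_neg_half_zero (hx : x ∈ Ico (-1/2) 0) : fA x = x + 1 := by
  rw [fA, if_neg hx.1.not_gt, if_pos (by linarith [hx.2]), Stilde, if_pos hx.2]

lemma fA_of_mem_Ico_zero_half (hx : x ∈ Ico 0 (1/2)) : fA x = x - 1 := by
  rcases hx.1.eq_or_lt with rfl | hpos
  · norm_num [fA, Stilde]
  · rw [fA, if_neg (by linarith), if_pos hx.2, Stilde, if_neg hpos.not_gt, if_neg hpos.ne']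

lemma fA_of_half_le (hx : 1/2 ≤ x) : fA x = 2 - 1/x := by
  rcases hx.eq_or_lt with rfl | hlt
  · norm_num [fA, Tinvtilde]
  · rw [fA, if_neg (by linarith), if_neg (by linarith), Tinvtilde, if_neg (by linarith),
      if_neg hlt.not_ge]

lemma fA_injOn_and_image_Ico_of_le_neg_half (hab : a ≤ b) (hb : b ≤ -1/2) :
    InjOn fA (Ico a b) ∧ fA '' Ico a b = Ico (-2 - 1/a) (-2 - 1/b) := by
  have hneg : ∀ y ∈ Icc a b, y < 0 := fun y hy => by linarith [hy.2]
  refine EqOn.injOn_and_image_Ico (g := fun y => -2 - 1/y) hab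
    (fun y hy => fA_of_lt_neg_half (hy.2.trans_le hb)) ?_ ?_
  · exact continuousOn_const.sub
      (continuousOn_const.div continuousOn_id fun y hy => (hneg y hy).ne)
  · intro y _ z hz hyz
    have := one_div_lt_one_div_of_neg_of_lt (hneg z hz) hyz
    linarith

lemma fA_injOn_and_image_Ico_of_neg_half_le_of_le_zero (hab : a ≤ b) (ha : -1/2 ≤ a)
    (hb : b ≤ 0) : InjOn fA (Ico a b) ∧ fA '' Ico a b = Ico (a + 1) (b + 1) :=
  EqOn.injOn_and_image_Ico (g := fun y => y + 1) hab
    (fun _ hy => fA_of_mem_Ico_neg_half_zero ⟨ha.trans hy.1, hy.2.trans_le hb⟩)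
    (continuous_add_const 1).continuousOn ((strictMono_id.add_const 1).strictMonoOn _)

lemma fA_injOn_and_image_Ico_of_zero_le_of_le_half (hab : a ≤ b) (ha : 0 ≤ a)
    (hb : b ≤ 1/2) : InjOn fA (Ico a b) ∧ fA '' Ico a b = Ico (a - 1) (b - 1) :=
  EqOn.injOn_and_image_Ico (g := fun y => y - 1) hab
    (fun _ hy => fA_of_mem_Ico_zero_half ⟨ha.trans hy.1, hy.2.trans_le hb⟩)
    (continuous_sub_right 1).continuousOn ((strictMono_id.add_const (-1)).strictMonoOn _)

lemma fA_injOn_and_image_Ico_of_half_le (hab : a ≤ b) (ha : 1/2 ≤ a) :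
    InjOn fA (Ico a b) ∧ fA '' Ico a b = Ico (2 - 1/a) (2 - 1/b) := by
  have hpos : ∀ y ∈ Icc a b, 0 < y := fun y hy => by linarith [hy.1]
  refine EqOn.injOn_and_image_Ico (g := fun y => 2 - 1/y) hab
    (fun y hy => fA_of_half_le (ha.trans hy.1)) ?_ ?_
  · exact continuousOn_const.sub
      (continuousOn_const.div continuousOn_id fun y hy => (hpos y hy).ne')
  · intro y hy z _ hyz
    have := one_div_lt_one_div_of_lt (hpos y hy) hyz
    linarith

end ArtinMap

/-- The Artin map is injective on each element of the Markov partition `J₁,…,J₈` and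
satisfies the Markov image equalities of the Artin transition diagram. -/
theorem artin_markov :
    Set.InjOn fA J1 ∧ Set.InjOn fA J2 ∧ Set.InjOn fA J3 ∧ Set.InjOn fA J4 ∧
    Set.InjOn fA J5 ∧ Set.InjOn fA J6 ∧ Set.InjOn fA J7 ∧ Set.InjOn fA J8 ∧
    fA '' J1 = J1 ∪ J2 ∧ fA '' J2 = J3 ∪ J4 ∧ fA '' J3 = J7 ∧ fA '' J4 = J8 ∧
    fA '' J5 = J1 ∧ fA '' J6 = J2 ∧ fA '' J7 = J5 ∪ J6 ∧ fA '' J8 = J7 ∪ J8 := by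
  have h1 := fA_injOn_and_image_Ico_of_le_neg_half (a := -1) (b := -2/3) (by norm_num) (by norm_num)
  have h2 := fA_injOn_and_image_Ico_of_le_neg_half (a := -2/3) (b := -1/2) (by norm_num) le_rfl
  have h3 := fA_injOn_and_image_Ico_of_neg_half_le_of_le_zero (a := -1/2) (b := -1/3)
    (by norm_num) le_rfl (by norm_num)
  have h4 := fA_injOn_and_image_Ico_of_neg_half_le_of_le_zero (a := -1/3) (b := 0)
    (by norm_num) (by norm_num) le_rfl
  have h5 := fA_injOn_and_image_Ico_of_zero_le_of_le_half (a := 0) (b := 1/3)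
    (by norm_num) le_rfl (by norm_num)
  have h6 := fA_injOn_and_image_Ico_of_zero_le_of_le_half (a := 1/3) (b := 1/2)
    (by norm_num) (by norm_num) le_rfl
  have h7 := fA_injOn_and_image_Ico_of_half_le (a := 1/2) (b := 2/3) (by norm_num) le_rfl
  have h8 := fA_injOn_and_image_Ico_of_half_le (a := 2/3) (b := 1) (by norm_num) (by norm_num)
  norm_num at h1 h2 h3 h4 h5 h6 h7 h8
  simp only [J1, J2, J3, J4, J5, J6, J7, J8]
  rw [Ico_union_Ico_eq_Ico (by norm_num) (by norm_num),
    Ico_union_Ico_eq_Ico (by norm_num) (by norm_num),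
    Ico_union_Ico_eq_Ico (by norm_num) (by norm_num),
    Ico_union_Ico_eq_Ico (by norm_num) (by norm_num)]
  norm_num
  exact ⟨h1.1, h2.1, h3.1, h4.1, h5.1, h6.1, h7.1, h8.1,
    h1.2, h2.2, h3.2, h4.2, h5.2, h6.2, h7.2, h8.2⟩
end

section
/- The Hurwitz map f̃_H is injective on each of the intervals J₁,…,J₈ and is Markov with respect to this partition, with image equalities: f̃_H(J₁) = J₁ ∪ J₂, f̃_H(J₂) = J₃ ∪ J₄, f̃_H(J₃) = J₅, f̃_H(J₄) = J₈, f̃_H(J₅) = J₁, f̃_H(J₆) = J₄, f̃_H(J₇) = J₅ ∪ J₆, f̃_H(J₈) = J₇ ∪ J₈. -/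
/-- The Hurwitz map `f̃_H : [-1,1) → [-1,1)`. -/
noncomputable def fH (x : ℝ) : ℝ :=
  if x < -1/3 then Ttilde x
  else if x < 1/3 then Stilde x
  else Tinvtilde x

open Set

section
variable {𝕜 : Type*} [Field 𝕜] {a b c d : 𝕜}

def mobius (a b c d x : 𝕜) : 𝕜 := (a * x + b) / (c * x + d)

lemma mobius_sub_mobius {x y : 𝕜} (hx : c * x + d ≠ 0) (hy : c * y + d ≠ 0) :
    mobius a b c d x - mobius a b c d y =
      (a * d - b * c) * (x - y) / ((c * x + d) * (c * y + d)) := by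
  rw [mobius, mobius, div_sub_div _ _ hx hy]
  ring

variable [LinearOrder 𝕜] [IsStrictOrderedRing 𝕜]

lemma strictMonoOn_mobius {s : Set 𝕜} (hdet : 0 < a * d - b * c)
    (hs : ∀ x ∈ s, 0 < c * x + d) : StrictMonoOn (mobius a b c d) s := by
  intro x hx y hy hxy
  have hx' := hs x hx
  have hy' := hs y hy
  refine sub_pos.1 ?_
  rw [mobius_sub_mobius hy'.ne' hx'.ne']
  exact div_pos (mul_pos hdet (sub_pos.2 hxy)) (mul_pos hy' hx')

variable [TopologicalSpace 𝕜] [OrderTopology 𝕜]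

lemma continuousOn_mobius {s : Set 𝕜} (hs : ∀ x ∈ s, c * x + d ≠ 0) :
    ContinuousOn (mobius a b c d) s :=
  ContinuousOn.div (by fun_prop) (by fun_prop) hs

end

lemma bijOn_mobius_Ico {a b c d p q : ℝ} (hpq : p ≤ q) (hdet : 0 < a * d - b * c)
    (hp : 0 < c * p + d) (hq : 0 < c * q + d) :
    BijOn (mobius a b c d) (Ico p q) (Ico (mobius a b c d p) (mobius a b c d q)) := by
  have hpos : ∀ x ∈ Icc p q, 0 < c * x + d := by
    rintro x ⟨hpx, hxq⟩
    rcases le_total 0 c with hc | hc <;> nlinarith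
  have hmono := strictMonoOn_mobius hdet hpos
  have hcont := continuousOn_mobius (a := a) (b := b) fun x hx => (hpos x hx).ne'
  rw [← hcont.image_Ico_of_strictMonoOn hpq hmono]
  exact (hmono.injOn.mono Ico_subset_Icc_self).bijOn_image

lemma bijOn_Ico_of_eqOn_mobius {f : ℝ → ℝ} {a b c d p q r s : ℝ}
    (hf : EqOn f (mobius a b c d) (Ico p q)) (hpq : p ≤ q) (hdet : 0 < a * d - b * c)
    (hp : 0 < c * p + d) (hq : 0 < c * q + d) (hr : mobius a b c d p = r)
    (hs : mobius a b c d q = s) : BijOn f (Ico p q) (Ico r s) := by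
  subst hr hs
  exact (bijOn_mobius_Ico hpq hdet hp hq).congr hf.symm

lemma eqOn_fH_Ico_neg_one_neg_half : EqOn fH (mobius 2 1 (-1) 0) (Ico (-1) (-1/2)) := by
  rintro x ⟨h1, h2⟩
  have hx : x ≠ 0 := by linarith
  rw [fH, Ttilde, if_pos (by linarith), if_pos (by linarith), mobius,
    eq_div_iff (by linarith)]
  field_simp
  ring

lemma eqOn_fH_J3 : EqOn fH (mobius 2 1 3 2) J3 := by
  rintro x ⟨h1, h2⟩
  rcases h1.eq_or_lt with rfl | h1
  · norm_num [fH, Ttilde, mobius]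
  · rw [fH, Ttilde, if_pos h2, if_neg (by linarith), if_pos (by linarith), mobius]
    ring_nf

lemma eqOn_fH_J4 : EqOn fH (mobius 1 1 0 1) J4 := by
  rintro x ⟨h1, h2⟩
  rw [fH, Stilde, if_neg (by linarith), if_pos (by linarith), if_pos h2, mobius]
  ring

lemma eqOn_fH_J5 : EqOn fH (mobius 1 (-1) 0 1) J5 := by
  rintro x ⟨h1, h2⟩
  rw [fH, Stilde, if_neg (by linarith), if_pos h2, if_neg (by linarith), mobius]
  rcases h1.eq_or_lt with rfl | h1
  · norm_num -- the special value `S̃ 0 = -1` is the value of `x - 1` at `0`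
  · rw [if_neg h1.ne']; ring

lemma eqOn_fH_J6 : EqOn fH (mobius 2 (-1) (-3) 2) J6 := by
  rintro x ⟨h1, h2⟩
  have hx : 3 * x - 2 ≠ 0 := by linarith
  have hx' : -3 * x + 2 ≠ 0 := by linarith
  rw [fH, Tinvtilde, if_neg (by linarith), if_neg (by linarith), if_neg (by linarith),
    if_pos h2.le, mobius, div_eq_div_iff hx hx']
  ring

lemma eqOn_fH_Ico_half_one : EqOn fH (mobius 2 (-1) 1 0) (Ico (1/2) 1) := by
  rintro x ⟨h1, h2⟩
  rcases h1.eq_or_lt with rfl | h1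
  · norm_num [fH, Tinvtilde, mobius]
  · have hx : x ≠ 0 := by linarith
    rw [fH, Tinvtilde, if_neg (by linarith), if_neg (by linarith), if_neg (by linarith),
      if_neg (by linarith), mobius]
    field_simp
    ring

lemma bijOn_fH_J1 : BijOn fH J1 (J1 ∪ J2) := by
  rw [J1, J2, Ico_union_Ico_eq_Ico (by norm_num) (by norm_num)]
  refine bijOn_Ico_of_eqOn_mobius (eqOn_fH_Ico_neg_one_neg_half.mono (Ico_subset_Ico_right (by norm_num)))
    ?_ ?_ ?_ ?_ ?_ ?_ <;> norm_num [mobius]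

lemma bijOn_fH_J2 : BijOn fH J2 (J3 ∪ J4) := by
  rw [J3, J4, Ico_union_Ico_eq_Ico (by norm_num) (by norm_num)]
  refine bijOn_Ico_of_eqOn_mobius (eqOn_fH_Ico_neg_one_neg_half.mono (Ico_subset_Ico_left (by norm_num)))
    ?_ ?_ ?_ ?_ ?_ ?_ <;> norm_num [mobius]

lemma bijOn_fH_J3 : BijOn fH J3 J5 := by
  refine bijOn_Ico_of_eqOn_mobius eqOn_fH_J3 ?_ ?_ ?_ ?_ ?_ ?_ <;> norm_num [mobius]

lemma bijOn_fH_J4 : BijOn fH J4 J8 := by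
  refine bijOn_Ico_of_eqOn_mobius eqOn_fH_J4 ?_ ?_ ?_ ?_ ?_ ?_ <;> norm_num [mobius]

lemma bijOn_fH_J5 : BijOn fH J5 J1 := by
  refine bijOn_Ico_of_eqOn_mobius eqOn_fH_J5 ?_ ?_ ?_ ?_ ?_ ?_ <;> norm_num [mobius]

lemma bijOn_fH_J6 : BijOn fH J6 J4 := by
  refine bijOn_Ico_of_eqOn_mobius eqOn_fH_J6 ?_ ?_ ?_ ?_ ?_ ?_ <;> norm_num [mobius]

lemma bijOn_fH_J7 : BijOn fH J7 (J5 ∪ J6) := by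
  rw [J5, J6, Ico_union_Ico_eq_Ico (by norm_num) (by norm_num)]
  refine bijOn_Ico_of_eqOn_mobius (eqOn_fH_Ico_half_one.mono (Ico_subset_Ico_right (by norm_num)))
    ?_ ?_ ?_ ?_ ?_ ?_ <;> norm_num [mobius]

lemma bijOn_fH_J8 : BijOn fH J8 (J7 ∪ J8) := by
  rw [J7, J8, Ico_union_Ico_eq_Ico (by norm_num) (by norm_num)]
  refine bijOn_Ico_of_eqOn_mobius (eqOn_fH_Ico_half_one.mono (Ico_subset_Ico_left (by norm_num)))
    ?_ ?_ ?_ ?_ ?_ ?_ <;> norm_num [mobius]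

/-- The Hurwitz map is injective on each element of the Markov partition `J₁,…,J₈` and
satisfies the Markov image equalities of the Hurwitz transition diagram. -/
theorem hurwitz_markov :
    Set.InjOn fH J1 ∧ Set.InjOn fH J2 ∧ Set.InjOn fH J3 ∧ Set.InjOn fH J4 ∧
    Set.InjOn fH J5 ∧ Set.InjOn fH J6 ∧ Set.InjOn fH J7 ∧ Set.InjOn fH J8 ∧
    fH '' J1 = J1 ∪ J2 ∧ fH '' J2 = J3 ∪ J4 ∧ fH '' J3 = J5 ∧ fH '' J4 = J8 ∧
    fH '' J5 = J1 ∧ fH '' J6 = J4 ∧ fH '' J7 = J5 ∪ J6 ∧ fH '' J8 = J7 ∪ J8 :=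
  ⟨bijOn_fH_J1.injOn, bijOn_fH_J2.injOn, bijOn_fH_J3.injOn, bijOn_fH_J4.injOn,
    bijOn_fH_J5.injOn, bijOn_fH_J6.injOn, bijOn_fH_J7.injOn, bijOn_fH_J8.injOn,
    bijOn_fH_J1.image_eq, bijOn_fH_J2.image_eq, bijOn_fH_J3.image_eq, bijOn_fH_J4.image_eq,
    bijOn_fH_J5.image_eq, bijOn_fH_J6.image_eq, bijOn_fH_J7.image_eq, bijOn_fH_J8.image_eq⟩
end
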